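/- Let K be a closed C^{1,1} curve in ℝ³ of unit thickness (thickness at least 1), and let Wr(K) be its writhe, given by the Gauss integral Wr(K) = (1/4π) ∮_K ∮_K det(K'(s), K'(t), K(s)−K(t)) / |K(s)−K(t)|³ ds dt. Then Len(K) ≥ 2π·√|Wr(K)|. -/

import Mathlib

open Set Metric Filter
open scoped ENNReal NNReal

noncomputable section

/-- Points of ℝ³. -/
abbrev E3 : Type := EuclideanSpace ℝ (Fin 3)

/-- The radius of the circle through three points `x y z` of ℝ³:
the infimal possible common distance from a point `c` to all three of them.
For non-collinear points this is the circumradius; for collinear (distinct)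
points the set is empty and the value is `∞`. -/
def circumradius3 (x y z : E3) : ℝ≥0∞ :=
  sInf {r : ℝ≥0∞ | ∃ c : E3, edist c x = r ∧ edist c y = r ∧ edist c z = r}

/-- The thickness of a set `L ⊆ ℝ³`: the infimum of `circumradius3 x y z`
over triples of pairwise distinct points of `L`. -/
def thickness (L : Set E3) : ℝ≥0∞ :=
  ⨅ (x ∈ L) (y ∈ L) (z ∈ L) (_ : x ≠ y) (_ : y ≠ z) (_ : x ≠ z),
    circumradius3 x y z
/-- The determinant of three vectors of ℝ³ (the scalar triple product). -/
def det3 (u v w : E3) : ℝ :=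
  u 0 * (v 1 * w 2 - v 2 * w 1) - u 1 * (v 0 * w 2 - v 2 * w 0) +
    u 2 * (v 0 * w 1 - v 1 * w 0)


/-!
A circle through three points of a curve of unit thickness has radius at least `1`. Sliding one
of the three points into another along the curve, the circles through `γ s, γ (s + ε), γ t`
converge to the circle tangent at `γ s` through `γ t`, whose radius is
`‖w‖⁴ / (4 ‖γ' s × w‖²)` with `w = γ t - γ s`; hence `‖γ' s × w‖ ≤ ‖w‖² / 2`. Since
`|det (a, b, w)| ‖w‖ ≤ ‖a × w‖ ‖b × w‖`, the Gauss integrand is bounded by `1/4`, so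
`|Wr| ≤ L² / (16 π) ≤ L² / (4 π²)`.
-/

open scoped RealInnerProductSpace Topology

section GramDet

variable {F : Type*} [NormedAddCommGroup F] [InnerProductSpace ℝ F]

/-- The Gram determinant of two vectors; in `ℝ³` it is `‖u × v‖²`. -/
def gramDet (u v : F) : ℝ := ‖u‖ ^ 2 * ‖v‖ ^ 2 - ⟪u, v⟫ ^ 2

lemma gramDet_nonneg (u v : F) : 0 ≤ gramDet u v := by
  have h := real_inner_mul_inner_self_le u v
  rw [real_inner_self_eq_norm_sq, real_inner_self_eq_norm_sq] at h
  unfold gramDet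
  nlinarith

lemma gramDet_smul_left (a : ℝ) (u v : F) : gramDet (a • u) v = a ^ 2 * gramDet u v := by
  simp only [gramDet, norm_smul, real_inner_smul_left, Real.norm_eq_abs, mul_pow, sq_abs]
  ring

lemma gramDet_neg_right (u v : F) : gramDet u (-v) = gramDet u v := by
  simp [gramDet]

lemma continuous_gramDet_left (v : F) : Continuous fun u : F => gramDet u v := by
  unfold gramDet
  fun_prop

/-- `z` is the circumcenter of `0, u, v`. -/
lemma exists_norm_sub_eq_norm_of_gramDet_pos {u v : F} (hG : 0 < gramDet u v) :
    ∃ z : F, ‖z - u‖ = ‖z‖ ∧ ‖z - v‖ = ‖z‖ ∧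
      4 * gramDet u v * ‖z‖ ^ 2 = ‖u‖ ^ 2 * ‖v‖ ^ 2 * ‖u - v‖ ^ 2 := by
  set a := ‖v‖ ^ 2 * (‖u‖ ^ 2 - ⟪u, v⟫) / (2 * gramDet u v)
  set b := ‖u‖ ^ 2 * (‖v‖ ^ 2 - ⟪u, v⟫) / (2 * gramDet u v)
  set z := a • u + b • v
  have hzu : ⟪z, u⟫ = ‖u‖ ^ 2 / 2 := by
    simp only [z, a, b, inner_add_left, real_inner_smul_left, real_inner_self_eq_norm_sq,
      real_inner_comm u v]
    field_simp
    unfold gramDet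
    ring
  have hzv : ⟪z, v⟫ = ‖v‖ ^ 2 / 2 := by
    simp only [z, a, b, inner_add_left, real_inner_smul_left, real_inner_self_eq_norm_sq]
    field_simp
    unfold gramDet
    ring
  have hz : ‖z‖ ^ 2 = a * (‖u‖ ^ 2 / 2) + b * (‖v‖ ^ 2 / 2) := by
    rw [← real_inner_self_eq_norm_sq, ← hzu, ← hzv, real_inner_comm u, real_inner_comm v]
    exact inner_add_left .. |>.trans (by rw [real_inner_smul_left, real_inner_smul_left])
  have equidist {y : F} (hy : ⟪z, y⟫ = ‖y‖ ^ 2 / 2) : ‖z - y‖ = ‖z‖ := by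
    rw [← sq_eq_sq₀ (norm_nonneg _) (norm_nonneg _), norm_sub_sq_real, hy]
    ring
  refine ⟨z, equidist hzu, equidist hzv, ?_⟩
  rw [hz, norm_sub_sq_real]
  simp only [a, b]
  field_simp
  ring

/-- Dividing the hypothesis by `ε²` turns the chord `f (s + ε) - f s` into a difference quotient,
so both sides converge as `ε → 0`. -/
lemma four_mul_gramDet_le_of_hasDerivAt {f : ℝ → F} {T : F} {s : ℝ} (hf : HasDerivAt f T s)
    (v : F) (h : ∀ ε, 4 * gramDet (f (s + ε) - f s) v ≤
      ‖f (s + ε) - f s‖ ^ 2 * ‖v‖ ^ 2 * ‖f (s + ε) - f s - v‖ ^ 2) :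
    4 * gramDet T v ≤ ‖T‖ ^ 2 * ‖v‖ ^ 4 := by
  have hslope := hf.tendsto_slope_zero
  have hchord : Tendsto (fun ε => f (s + ε) - f s) (𝓝[≠] 0) (𝓝 0) := by
    have hc : ContinuousAt (fun ε => f (s + ε) - f s) 0 :=
      ((hf.continuousAt.comp_of_eq (continuous_const_add s).continuousAt (add_zero s)).sub
        continuousAt_const)
    simpa using hc.tendsto.mono_left nhdsWithin_le_nhds
  have hlhs := ((continuous_gramDet_left v).tendsto T).comp hslope |>.const_mul 4
  have hrhs := ((hslope.norm.pow 2).mul_const (‖v‖ ^ 2)).mul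
    ((hchord.sub_const v).norm.pow 2)
  refine (le_of_tendsto_of_tendsto' hlhs hrhs fun ε => ?_).trans_eq
    (by rw [zero_sub, norm_neg]; ring)
  simp only [Function.comp_apply, gramDet_smul_left, norm_smul, Real.norm_eq_abs, mul_pow, sq_abs]
  linear_combination mul_le_mul_of_nonneg_left (h ε) (sq_nonneg ε⁻¹)

end GramDet

lemma circumradius3_le_dist {x y z c : E3} (hy : dist c y = dist c x) (hz : dist c z = dist c x) :
    circumradius3 x y z ≤ ENNReal.ofReal (dist c x) :=
  sInf_le ⟨c, edist_dist c x, by rw [edist_dist, hy], by rw [edist_dist, hz]⟩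

lemma thickness_le_circumradius3 {A : Set E3} {x y z : E3} (hx : x ∈ A) (hy : y ∈ A)
    (hz : z ∈ A) (hxy : x ≠ y) (hyz : y ≠ z) (hxz : x ≠ z) :
    thickness A ≤ circumradius3 x y z :=
  iInf₂_le_of_le x hx <| iInf₂_le_of_le y hy <| iInf₂_le_of_le z hz <|
    iInf₂_le_of_le hxy hyz <| iInf_le _ hxz

/-- The conclusion says that the circle through `x, x + u, x + v` has radius at least `1`. -/
lemma four_mul_gramDet_le_of_one_le_thickness {A : Set E3} (hA : 1 ≤ thickness A) {x u v : E3}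
    (hx : x ∈ A) (hu : x + u ∈ A) (hv : x + v ∈ A) :
    4 * gramDet u v ≤ ‖u‖ ^ 2 * ‖v‖ ^ 2 * ‖u - v‖ ^ 2 := by
  rcases le_or_gt (gramDet u v) 0 with hG | hG
  · exact (by linarith : 4 * gramDet u v ≤ 0).trans (by positivity)
  obtain ⟨z, hzu, hzv, hz⟩ := exists_norm_sub_eq_norm_of_gramDet_pos hG
  have hu0 : u ≠ 0 := by rintro rfl; simp [gramDet] at hG
  have hv0 : v ≠ 0 := by rintro rfl; simp [gramDet] at hG
  have huv : u ≠ v := by rintro rfl; simp [gramDet] at hG; nlinarith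
  have hR : 1 ≤ circumradius3 x (x + u) (x + v) :=
    hA.trans <| thickness_le_circumradius3 hx hu hv (by simpa using hu0)
      (by simpa using huv) (by simpa using hv0)
  have hdist : dist (x + z) x = ‖z‖ := dist_self_add_left z x
  have hz1 : 1 ≤ ‖z‖ := by
    rw [← hdist, ← ENNReal.one_le_ofReal]
    refine hR.trans (circumradius3_le_dist ?_ ?_) <;>
      rw [dist_add_left, dist_eq_norm, hdist] <;> assumption
  have hz1' : 1 ≤ ‖z‖ ^ 2 := one_le_pow₀ hz1
  nlinarith

lemma four_mul_gramDet_deriv_le {γ : ℝ → E3} {s : ℝ} (hγ : DifferentiableAt ℝ γ s)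
    (hthick : 1 ≤ thickness (range γ)) (t : ℝ) :
    4 * gramDet (deriv γ s) (γ t - γ s) ≤ ‖deriv γ s‖ ^ 2 * ‖γ t - γ s‖ ^ 4 :=
  four_mul_gramDet_le_of_hasDerivAt hγ.hasDerivAt _ fun ε =>
    four_mul_gramDet_le_of_one_le_thickness hthick (mem_range_self s) (by simp) (by simp)

lemma inner_E3_eq (u v : E3) : ⟪u, v⟫ = u 0 * v 0 + u 1 * v 1 + u 2 * v 2 := by
  simp [PiLp.inner_apply, Fin.sum_univ_three, mul_comm]

/-- In terms of cross products this is `|(a × w) × (b × w)|² + ((a × w) ⬝ (b × w))² =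
‖a × w‖² ‖b × w‖²`, with `(a × w) × (b × w) = det (a, b, w) • w`. -/
lemma det3_sq_mul_norm_sq_add_sq (a b w : E3) :
    det3 a b w ^ 2 * ‖w‖ ^ 2 + (⟪a, b⟫ * ‖w‖ ^ 2 - ⟪a, w⟫ * ⟪b, w⟫) ^ 2 =
      gramDet a w * gramDet b w := by
  simp only [gramDet, ← real_inner_self_eq_norm_sq, inner_E3_eq, det3]
  ring

lemma four_mul_abs_det3_le {a b w : E3} (ha : 4 * gramDet a w ≤ ‖w‖ ^ 4)
    (hb : 4 * gramDet b w ≤ ‖w‖ ^ 4) : 4 * |det3 a b w| ≤ ‖w‖ ^ 3 := by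
  have hGG : gramDet a w * gramDet b w ≤ ‖w‖ ^ 4 / 4 * (‖w‖ ^ 4 / 4) :=
    mul_le_mul (by linarith) (by linarith) (gramDet_nonneg b w) (by positivity)
  have hprod : (4 * det3 a b w) ^ 2 * ‖w‖ ^ 2 ≤ (‖w‖ ^ 3) ^ 2 * ‖w‖ ^ 2 := by
    nlinarith [det3_sq_mul_norm_sq_add_sq a b w,
      sq_nonneg (⟪a, b⟫ * ‖w‖ ^ 2 - ⟪a, w⟫ * ⟪b, w⟫)]
  rcases (norm_nonneg w).eq_or_lt with hw | hw
  · rw [← hw, norm_eq_zero.mp hw.symm]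
    simp [det3]
  · have h := sq_le_sq.mp (le_of_mul_le_mul_right hprod (by positivity))
    rwa [abs_mul, abs_of_pos (by norm_num : (0:ℝ) < 4),
      abs_of_nonneg (by positivity : (0:ℝ) ≤ ‖w‖ ^ 3)] at h

lemma abs_writhe_integrand_le {γ : ℝ → E3} (hdiff : Differentiable ℝ γ)
    (hspeed : ∀ t, ‖deriv γ t‖ = 1) (hthick : 1 ≤ thickness (range γ)) (s t : ℝ) :
    |det3 (deriv γ s) (deriv γ t) (γ s - γ t) / ‖γ s - γ t‖ ^ 3| ≤ 1 / 4 := by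
  have hs := four_mul_gramDet_deriv_le (hdiff s) hthick t
  have ht := four_mul_gramDet_deriv_le (hdiff t) hthick s
  rw [← neg_sub, gramDet_neg_right, norm_neg] at hs
  rw [hspeed, one_pow, one_mul] at hs ht
  rw [abs_div, abs_of_nonneg (by positivity : (0:ℝ) ≤ ‖γ s - γ t‖ ^ 3)]
  refine div_le_of_le_mul₀ (by positivity) (by norm_num) ?_
  linarith [four_mul_abs_det3_le hs ht]

lemma abs_intervalIntegral_intervalIntegral_le {f : ℝ → ℝ → ℝ} {C L : ℝ} (hL : 0 ≤ L)
    (hf : ∀ s t, |f s t| ≤ C) :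
    |∫ s in (0:ℝ)..L, ∫ t in (0:ℝ)..L, f s t| ≤ C * L ^ 2 := by
  have hinner (s : ℝ) : ‖∫ t in (0:ℝ)..L, f s t‖ ≤ C * |L - 0| :=
    intervalIntegral.norm_integral_le_of_norm_le_const fun t _ => hf s t
  have := intervalIntegral.norm_integral_le_of_norm_le_const (a := 0) (b := L) fun s _ => hinner s
  rw [sub_zero, abs_of_nonneg hL, Real.norm_eq_abs] at this
  linarith

theorem statement_13_general (γ : ℝ → E3) (L : ℝ) (hL : 0 < L)
    (hdiff : Differentiable ℝ γ)
    (hspeed : ∀ t, ‖deriv γ t‖ = 1)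
    (hthick : 1 ≤ thickness (range γ)) :
    2 * Real.pi * Real.sqrt
        |(1 / (4 * Real.pi)) * ∫ s in (0:ℝ)..L, ∫ t in (0:ℝ)..L,
            det3 (deriv γ s) (deriv γ t) (γ s - γ t) / ‖γ s - γ t‖ ^ 3|
      ≤ L := by
  have hW := abs_intervalIntegral_intervalIntegral_le hL.le
    (abs_writhe_integrand_le hdiff hspeed hthick)
  have hpi := Real.pi_pos
  rw [abs_mul, abs_of_pos (by positivity : 0 < 1 / (4 * Real.pi)), ← le_div_iff₀' (by positivity),
    Real.sqrt_le_iff]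
  refine ⟨by positivity, ?_⟩
  calc 1 / (4 * Real.pi) * |_| ≤ 1 / (4 * Real.pi) * (1 / 4 * L ^ 2) := by gcongr
    _ ≤ (L / (2 * Real.pi)) ^ 2 := by
      rw [div_pow, mul_pow]
      field_simp
      nlinarith [Real.pi_le_four, sq_nonneg L]

/-- Let `γ` be a closed simple `C^{1,1}` curve of unit
thickness in ℝ³, parametrized by arclength with period `L` (its length), and
let `Wr` be its writhe, given by the Gauss double integral.  Then
`L = Len(γ) ≥ 2π √|Wr|`. -/
theorem statement_13 (γ : ℝ → E3) (L : ℝ) (hL : 0 < L)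
    (hper : Function.Periodic γ L)
    (hdiff : Differentiable ℝ γ)
    (hspeed : ∀ t, ‖deriv γ t‖ = 1)
    (hlip : ∃ C : ℝ≥0, LipschitzWith C (deriv γ))
    (hinj : ∀ s ∈ Ico 0 L, ∀ t ∈ Ico 0 L, γ s = γ t → s = t)
    (hthick : 1 ≤ thickness (range γ)) :
    2 * Real.pi * Real.sqrt
        |(1 / (4 * Real.pi)) * ∫ s in (0:ℝ)..L, ∫ t in (0:ℝ)..L,
            det3 (deriv γ s) (deriv γ t) (γ s - γ t) / ‖γ s - γ t‖ ^ 3|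
      ≤ L :=
  statement_13_general γ L hL hdiff hspeed hthick
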